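/- Let H₁, H₂ be Hilbert spaces, C : dom C ⊆ H₂ → H₁ a densely defined closed linear operator, and 𝔫 ∈ L(H₂) with Re⟨𝔫φ,φ⟩ ≥ κ‖φ‖² for all φ ∈ H₂ and some κ > 0. For λ = ν + ik with ν > 0 fixed and k ∈ ℝ, suppose U = (u₁,u₂) ∈ dom C* × dom C solves λu₁ + Cu₂ = f₁ and 𝔫u₂ - C*u₁ = f₂. Then ‖λu₁‖_{H₁} + ‖λ^{1/2}u₂‖_{H₂} + ‖λ^{1/2}C*u₁‖_{H₂} + ‖Cu₂‖_{H₁} ≤ C₀(‖f₁‖_{H₁} + ‖λ^{1/2}f₂‖_{H₂}) for a constant C₀ depending only on κ, ν and ‖𝔫‖. -/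

import Mathlib

/-
Write `v = C u₂` and `m = ⟪u₂, 𝔫 u₂⟫`. Pairing the first equation with `v`, the second with `u₂`,
and using `⟪C* u₁, u₂⟫ = ⟪u₁, C u₂⟫` gives `λ m + ‖v‖² = ⟪v, f₁⟫ + λ ⟪u₂, f₂⟫ =: R`.
Multiplying by `conj λ` and taking real parts (`Re λ ≥ 0`) gives `|λ| κ ‖u₂‖² ≤ |R|`, while the real
part of `R - λ m` gives `‖v‖² ≤ |R| + ‖𝔫‖ |λ| ‖u₂‖²`. In the variables `‖v‖` and `|λ|^{1/2} ‖u₂‖`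
these are quadratic inequalities with right-hand sides linear in `‖f₁‖ + |λ|^{1/2} ‖f₂‖`, which
bounds both variables; `λ u₁` and `|λ|^{1/2} C* u₁` are then read off from the two equations.
-/

open Complex

open scoped InnerProductSpace

theorem add_le_of_sq_le_linear {κ M p q x y : ℝ} (hκ : 0 < κ) (hM : 0 ≤ M) (hp : 0 ≤ p)
    (hq : 0 ≤ q) (hx : 0 ≤ x) (hy : 0 ≤ y) (hy₂ : κ * y ^ 2 ≤ p * x + q * y)
    (hx₂ : x ^ 2 ≤ M * y ^ 2 + (p * x + q * y)) :
    x + y ≤ 4 * (1 + (M + 1) / κ) * (p + q) := by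
  have hT : p * x + q * y ≤ (p + q) * (x + y) := by nlinarith [mul_nonneg hp hy, mul_nonneg hq hx]
  set P := (p + q) * (x + y) / κ
  have hP : 0 ≤ P := by positivity
  have hyP : y ^ 2 ≤ P := by rw [le_div_iff₀ hκ]; linarith
  have hKP : (1 + (M + 1) / κ) * ((p + q) * (x + y)) = (p + q) * (x + y) + (M + 1) * P := by
    simp only [P]; field_simp
  have hsq : (x + y) * (x + y) ≤ 4 * (1 + (M + 1) / κ) * (p + q) * (x + y) := by
    nlinarith [sq_nonneg (x - y), mul_le_mul_of_nonneg_left hyP hM]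
  rcases (add_nonneg hx hy).eq_or_lt with h | h
  · rw [← h]; positivity
  · exact le_of_mul_le_mul_right hsq h

theorem norm_mul_re_le_norm_of_mul_add_ofReal_eq {lam M R : ℂ} {t : ℝ} (hlam : 0 ≤ lam.re)
    (ht : 0 ≤ t) (h : lam * M + t = R) : ‖lam‖ * M.re ≤ ‖R‖ := by
  have hre : (starRingEnd ℂ lam * R).re = ‖lam‖ ^ 2 * M.re + lam.re * t := by
    rw [← h, mul_add, ← mul_assoc, conj_mul', add_re, ← ofReal_pow, re_ofReal_mul,
      re_mul_ofReal, conj_re]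
  have hle : (starRingEnd ℂ lam * R).re ≤ ‖lam‖ * ‖R‖ := by
    simpa using re_le_norm (starRingEnd ℂ lam * R)
  rcases (norm_nonneg lam).eq_or_lt with h0 | hpos
  · rw [← h0, zero_mul]; exact norm_nonneg R
  · nlinarith [mul_nonneg hlam ht]

theorem le_norm_add_norm_mul_of_mul_add_ofReal_eq {lam M R : ℂ} {t : ℝ}
    (h : lam * M + t = R) : t ≤ ‖R‖ + ‖lam‖ * ‖M‖ := by
  have : t = (R - lam * M).re := by rw [← h]; simp
  rw [this, ← norm_mul]
  exact (re_le_norm _).trans (norm_sub_le _ _)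

variable {E F : Type*} [NormedAddCommGroup E] [InnerProductSpace ℂ E]
  [NormedAddCommGroup F] [InnerProductSpace ℂ F]

theorem mul_inner_add_norm_sq_eq {lam : ℂ} {u₁ v f₁ : E} {u₂ w z f₂ : F}
    (hadj : ⟪w, u₂⟫_ℂ = ⟪u₁, v⟫_ℂ) (h₁ : lam • u₁ + v = f₁) (h₂ : z - w = f₂) :
    lam * ⟪u₂, z⟫_ℂ + (‖v‖ ^ 2 : ℝ) = ⟪v, f₁⟫_ℂ + lam * ⟪u₂, f₂⟫_ℂ := by
  have hw : ⟪u₂, w⟫_ℂ = ⟪v, u₁⟫_ℂ := by rw [← inner_conj_symm, hadj, inner_conj_symm]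
  rw [← h₁, ← h₂, inner_add_right, inner_smul_right, inner_sub_right, hw,
    inner_self_eq_norm_sq_to_K]
  simp only [RCLike.ofReal_eq_complex_ofReal, ofReal_pow]
  ring

noncomputable def maxRegConst (κ M : ℝ) : ℝ := 1 + 4 * (M + 2) * (1 + (M + 1) / κ)

theorem maxRegConst_pos {κ M : ℝ} (hκ : 0 < κ) (hM : 0 ≤ M) : 0 < maxRegConst κ M := by
  unfold maxRegConst; positivity

theorem maxRegularity_estimate [CompleteSpace F] {κ M : ℝ} (hκ : 0 < κ)
    {C : F →ₗ.[ℂ] E} (hC : Dense (C.domain : Set F)) {n : F →L[ℂ] F}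
    (hn : ∀ φ, κ * ‖φ‖ ^ 2 ≤ (⟪n φ, φ⟫_ℂ).re) (hnM : ‖n‖ ≤ M) {lam : ℂ} (hlam : 0 ≤ lam.re)
    {u₁ f₁ : E} {u₂ f₂ : F} (hu₁ : u₁ ∈ C.adjoint.domain) (hu₂ : u₂ ∈ C.domain)
    (h₁ : lam • u₁ + C ⟨u₂, hu₂⟩ = f₁) (h₂ : n u₂ - C.adjoint ⟨u₁, hu₁⟩ = f₂) :
    ‖lam‖ * ‖u₁‖ + √‖lam‖ * ‖u₂‖ + √‖lam‖ * ‖C.adjoint ⟨u₁, hu₁⟩‖ + ‖C ⟨u₂, hu₂⟩‖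
      ≤ maxRegConst κ M * (‖f₁‖ + √‖lam‖ * ‖f₂‖) := by
  set v := C ⟨u₂, hu₂⟩
  set w := C.adjoint ⟨u₁, hu₁⟩
  set s := √‖lam‖
  have hs : s ^ 2 = ‖lam‖ := Real.sq_sqrt (norm_nonneg _)
  have hM : 0 ≤ M := (norm_nonneg n).trans hnM
  have hnu : ‖n u₂‖ ≤ M * ‖u₂‖ := (n.le_opNorm u₂).trans (by gcongr)
  have hid := mul_inner_add_norm_sq_eq (C.adjoint_isFormalAdjoint hC ⟨u₁, hu₁⟩ ⟨u₂, hu₂⟩) h₁ h₂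
  have hR : ‖⟪v, f₁⟫_ℂ + lam * ⟪u₂, f₂⟫_ℂ‖ ≤ ‖f₁‖ * ‖v‖ + s * ‖f₂‖ * (s * ‖u₂‖) := by
    calc _ ≤ ‖v‖ * ‖f₁‖ + ‖lam‖ * (‖u₂‖ * ‖f₂‖) := by
          grw [norm_add_le, norm_mul, norm_inner_le_norm, norm_inner_le_norm]
      _ = _ := by rw [← hs]; ring
  have hcoercive : κ * (s * ‖u₂‖) ^ 2 ≤ ‖f₁‖ * ‖v‖ + s * ‖f₂‖ * (s * ‖u₂‖) :=
    calc κ * (s * ‖u₂‖) ^ 2 = ‖lam‖ * (κ * ‖u₂‖ ^ 2) := by rw [mul_pow, hs]; ring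
      _ ≤ ‖lam‖ * (⟪u₂, n u₂⟫_ℂ).re := by gcongr; rw [← inner_conj_symm, conj_re]; exact hn u₂
      _ ≤ _ := (norm_mul_re_le_norm_of_mul_add_ofReal_eq hlam (by positivity) hid).trans hR
  have hv : ‖v‖ ^ 2 ≤ M * (s * ‖u₂‖) ^ 2 + (‖f₁‖ * ‖v‖ + s * ‖f₂‖ * (s * ‖u₂‖)) :=
    calc ‖v‖ ^ 2 ≤ ‖⟪v, f₁⟫_ℂ + lam * ⟪u₂, f₂⟫_ℂ‖ + ‖lam‖ * ‖⟪u₂, n u₂⟫_ℂ‖ :=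
          le_norm_add_norm_mul_of_mul_add_ofReal_eq hid
      _ ≤ _ := by
        grw [hR, norm_inner_le_norm, hnu, ← hs]
        nlinarith
  have hsum := add_le_of_sq_le_linear hκ hM (norm_nonneg f₁) (by positivity) (norm_nonneg v)
    (by positivity) hcoercive hv
  have hlamu : ‖lam‖ * ‖u₁‖ ≤ ‖f₁‖ + ‖v‖ := by
    rw [← norm_smul, eq_sub_of_add_eq h₁]; exact norm_sub_le _ _
  have hw : ‖w‖ ≤ M * ‖u₂‖ + ‖f₂‖ := by
    rw [show w = n u₂ - f₂ by rw [← h₂, sub_sub_cancel]]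
    grw [norm_sub_le, hnu]
  calc _ ≤ (‖f₁‖ + s * ‖f₂‖) + (M + 2) * (‖v‖ + s * ‖u₂‖) := by
        nlinarith [mul_le_mul_of_nonneg_left hw (Real.sqrt_nonneg ‖lam‖),
          mul_nonneg hM (norm_nonneg v), mul_nonneg (Real.sqrt_nonneg ‖lam‖) (norm_nonneg u₂)]
    _ ≤ (‖f₁‖ + s * ‖f₂‖) + (M + 2) * (4 * (1 + (M + 1) / κ) * (‖f₁‖ + s * ‖f₂‖)) := by gcongr
    _ = _ := by unfold maxRegConst; ring

theorem stmt17_general (κ ν Mn : ℝ) (hκ : 0 < κ) (hν : 0 < ν) :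
    ∃ C₀ > 0,
      ∀ (H₁ : Type) (H₂ : Type)
        [NormedAddCommGroup H₁] [InnerProductSpace ℂ H₁] [CompleteSpace H₁]
        [NormedAddCommGroup H₂] [InnerProductSpace ℂ H₂] [CompleteSpace H₂]
        (C : H₂ →ₗ.[ℂ] H₁), Dense (C.domain : Set H₂) → C.IsClosed →
      ∀ n : H₂ →L[ℂ] H₂,
        (∀ φ : H₂, κ * ‖φ‖ ^ 2 ≤ (inner ℂ (n φ) φ : ℂ).re) → ‖n‖ ≤ Mn →
      ∀ (k : ℝ) (lam : ℂ), lam = (ν : ℂ) + (k : ℂ) * I →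
      ∀ (u₁ : H₁) (u₂ : H₂) (f₁ : H₁) (f₂ : H₂)
        (hu₁ : u₁ ∈ C.adjoint.domain) (hu₂ : u₂ ∈ C.domain),
        lam • u₁ + C ⟨u₂, hu₂⟩ = f₁ →
        n u₂ - C.adjoint ⟨u₁, hu₁⟩ = f₂ →
        ‖lam‖ * ‖u₁‖ + Real.sqrt (‖lam‖) * ‖u₂‖
            + Real.sqrt (‖lam‖) * ‖C.adjoint ⟨u₁, hu₁⟩‖
            + ‖C ⟨u₂, hu₂⟩‖
          ≤ C₀ * (‖f₁‖ + Real.sqrt (‖lam‖) * ‖f₂‖) := by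
  refine ⟨maxRegConst κ |Mn|, maxRegConst_pos hκ (abs_nonneg Mn), ?_⟩
  intro H₁ H₂ _ _ _ _ _ _ C hC _ n hn hnM k lam hlam u₁ u₂ f₁ f₂ hu₁ hu₂ h₁ h₂
  have hlam_re : 0 ≤ lam.re := by simpa [hlam] using hν.le
  exact maxRegularity_estimate hκ hC hn (hnM.trans (le_abs_self Mn)) hlam_re hu₁ hu₂ h₁ h₂

/-- maximal regularity for parabolic-type evolutionary block systems:
let `H₁, H₂` be Hilbert spaces, `C : dom C ⊆ H₂ → H₁` densely defined and closed,
`𝔫 ∈ L(H₂)` with `Re⟨𝔫φ,φ⟩ ≥ κ‖φ‖²` (`κ > 0`).  For `λ = ν + ik` (`ν > 0` fixed,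
`k ∈ ℝ`), if `U = (u₁,u₂) ∈ dom C* × dom C` solves `λu₁ + Cu₂ = f₁` and
`𝔫u₂ - C*u₁ = f₂`, then
`‖λu₁‖ + ‖λ^{1/2}u₂‖ + ‖λ^{1/2}C*u₁‖ + ‖Cu₂‖ ≤ C₀(‖f₁‖ + ‖λ^{1/2}f₂‖)`,
with `C₀` depending only on `κ`, `ν` and `‖𝔫‖` (note `‖λ^{1/2}x‖ = |λ|^{1/2}‖x‖`). -/
theorem stmt17 (κ ν Mn : ℝ) (hκ : 0 < κ) (hν : 0 < ν) (hMn : 0 < Mn) :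
    ∃ C₀ > 0,
      ∀ (H₁ : Type) (H₂ : Type)
        [NormedAddCommGroup H₁] [InnerProductSpace ℂ H₁] [CompleteSpace H₁]
        [NormedAddCommGroup H₂] [InnerProductSpace ℂ H₂] [CompleteSpace H₂]
        (C : H₂ →ₗ.[ℂ] H₁), Dense (C.domain : Set H₂) → C.IsClosed →
      ∀ n : H₂ →L[ℂ] H₂,
        (∀ φ : H₂, κ * ‖φ‖ ^ 2 ≤ (inner ℂ (n φ) φ : ℂ).re) → ‖n‖ ≤ Mn →
      ∀ (k : ℝ) (lam : ℂ), lam = (ν : ℂ) + (k : ℂ) * I →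
      ∀ (u₁ : H₁) (u₂ : H₂) (f₁ : H₁) (f₂ : H₂)
        (hu₁ : u₁ ∈ C.adjoint.domain) (hu₂ : u₂ ∈ C.domain),
        lam • u₁ + C ⟨u₂, hu₂⟩ = f₁ →
        n u₂ - C.adjoint ⟨u₁, hu₁⟩ = f₂ →
        ‖lam‖ * ‖u₁‖ + Real.sqrt (‖lam‖) * ‖u₂‖
            + Real.sqrt (‖lam‖) * ‖C.adjoint ⟨u₁, hu₁⟩‖
            + ‖C ⟨u₂, hu₂⟩‖
          ≤ C₀ * (‖f₁‖ + Real.sqrt (‖lam‖) * ‖f₂‖) :=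
  stmt17_general κ ν Mn hκ hν
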